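/- With the same setup as in the d-nice matrix lemma: if additionally d | β_{k−r} and d | β_{k+r+1} for some 0 ≤ r ≤ k (so the continued fraction is (d,r)-perfect at index k), then the product C_{k+r+1}·C_{k+r}···C_{k−r} is congruent to the zero matrix modulo d. -/

import Mathlib

/-!
Modulo `d`, the centred products `C_{k+r} ⋯ C_{k-r}` are anti-diagonal, with entries
`γ_{k,r}` above and `γ_{k,r-1}` below the diagonal. Multiplying by `C_{k+r+1}` on the left and
`C_{k-r-1}` on the right keeps the product anti-diagonal precisely because of the `d`-nice
condition at `r + 1`, and multiplies `γ` by `β_{k-r-1} β_{k+r+1}`. One more factor `C_{k+r+1}`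
gives `[[β_{k+r+1} γ_{k,r-1}, a_{k+r+1} γ_{k,r}], [0, γ_{k,r}]]`, which vanishes modulo `d`
because `d ∣ β_{k+r+1}` and `β_{k-r} ∣ γ_{k,r}`.
-/

/-- `gam β k r` is `γ_{k, r-1}`: the product of `β i` over the `r` indices
`i = k - r + 1, k - r + 3, …, k + r - 1` (so `gam β k 0 = γ_{k,-1} = 1`). -/
def gam (β : ℕ → ℤ) (k r : ℕ) : ℤ :=
  ∏ i ∈ Finset.range r, β (k + 1 - r + 2 * i)

/-- The matrix `C i = [[a i, β i],[1,0]]`. -/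
def Cmat (a β : ℕ → ℤ) (i : ℕ) : Matrix (Fin 2) (Fin 2) ℤ :=
  !![a i, β i; 1, 0]

lemma intCast_zmod_natAbs_eq_iff {d x y : ℤ} : (x : ZMod d.natAbs) = y ↔ x ≡ y [ZMOD d] :=
  (ZMod.intCast_eq_intCast_iff x y _).trans Int.modEq_natAbs

lemma intCast_zmod_natAbs_eq_zero_iff {d x : ℤ} : (x : ZMod d.natAbs) = 0 ↔ d ∣ x :=
  (ZMod.intCast_zmod_eq_zero_iff_dvd x _).trans Int.natAbs_dvd

section

variable (a β : ℕ → ℤ)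

lemma gam_one (k : ℕ) : gam β k 1 = β k := by simp [gam]

lemma gam_add_two {k r : ℕ} (h : r + 1 ≤ k) :
    gam β k (r + 2) = β (k - (r + 1)) * gam β k r * β (k + r + 1) := by
  have hfirst : k + 1 - (r + 2) + 2 * 0 = k - (r + 1) := by omega
  have hmid (i : ℕ) : k + 1 - (r + 2) + 2 * (i + 1) = k + 1 - r + 2 * i := by omega
  have hlast : k + 1 - (r + 2) + 2 * (r + 1) = k + r + 1 := by omega
  rw [gam, Finset.prod_range_succ, Finset.prod_range_succ', gam, hfirst, hlast]
  simp only [hmid]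
  ring

lemma dvd_gam_succ (k r : ℕ) : β (k - r) ∣ gam β k (r + 1) := by
  rw [gam, Finset.prod_range_succ']
  exact Dvd.intro_left _ (by congr 2; omega)

/-- `C_{k+r} ⋯ C_{k-r}`. -/
def centeredProd (k r : ℕ) : Matrix (Fin 2) (Fin 2) ℤ :=
  ((List.range (2 * r + 1)).map fun m => Cmat a β (k + r - m)).prod

lemma centeredProd_zero (k : ℕ) : centeredProd a β k 0 = Cmat a β k := by
  simp [centeredProd]

lemma centeredProd_succ (k r : ℕ) :
    centeredProd a β k (r + 1)
      = Cmat a β (k + r + 1) * centeredProd a β k r * Cmat a β (k - (r + 1)) := by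
  rw [centeredProd, show 2 * (r + 1) + 1 = (2 * r + 1) + 1 + 1 by ring, List.prod_range_succ',
    List.prod_range_succ, centeredProd, ← mul_assoc]
  have hmid (m : ℕ) : k + (r + 1) - (m + 1) = k + r - m := by omega
  have hlast : k + r - (2 * r + 1) = k - (r + 1) := by omega
  simp only [Nat.succ_eq_add_one, Nat.sub_zero, hmid, hlast]
  rfl

lemma prod_cmat_eq_mul_centeredProd (k r : ℕ) :
    ((List.range (2 * r + 2)).map fun m => Cmat a β (k + r + 1 - m)).prod
      = Cmat a β (k + r + 1) * centeredProd a β k r := by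
  rw [List.prod_range_succ', centeredProd]
  have hshift (m : ℕ) : k + r + 1 - (m + 1) = k + r - m := by omega
  simp only [Nat.succ_eq_add_one, Nat.sub_zero, hshift]

lemma map_cmat (i n : ℕ) :
    (Cmat a β i).map (Int.castRingHom (ZMod n)) = !![(a i : ZMod n), β i; 1, 0] := by
  ext i j
  fin_cases i <;> fin_cases j <;> simp [Cmat]

end

lemma centeredProd_map_intCast {d : ℤ} {a β : ℕ → ℤ} {k : ℕ} (hak : d ∣ a k)
    (hnice : ∀ r : ℕ, 1 ≤ r → r ≤ k →
      a (k - r) * β (k + r) * gam β k (r - 1) ≡ -(a (k + r) * gam β k r) [ZMOD d])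
    {r : ℕ} (hr : r ≤ k) :
    (centeredProd a β k r).map (Int.castRingHom (ZMod d.natAbs))
      = !![0, (gam β k (r + 1) : ZMod d.natAbs); (gam β k r : ZMod d.natAbs), 0] := by
  induction r with
  | zero =>
    rw [centeredProd_zero, map_cmat, intCast_zmod_natAbs_eq_zero_iff.mpr hak, gam_one]
    simp [gam]
  | succ r ih =>
    have hrel := intCast_zmod_natAbs_eq_iff.mpr (hnice (r + 1) (by omega) hr)
    push_cast at hrel
    rw [centeredProd_succ, Matrix.map_mul, Matrix.map_mul, ih (by omega), map_cmat, map_cmat,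
      gam_add_two β hr, Matrix.mul_fin_two, Matrix.mul_fin_two]
    simp only [EmbeddingLike.apply_eq_iff_eq, Matrix.vecCons_inj, Int.cast_mul, mul_zero, zero_mul,
      mul_one, one_mul, add_zero, zero_add, and_true]
    exact ⟨by linear_combination hrel, by ring⟩

theorem stmt1_general (d : ℤ) (a β : ℕ → ℤ) (k : ℕ)
    (hak : d ∣ a k)
    (hnice : ∀ r : ℕ, 1 ≤ r → r ≤ k →
      a (k - r) * β (k + r) * gam β k (r - 1) ≡ -(a (k + r) * gam β k r) [ZMOD d])
    (r : ℕ) (hr : r ≤ k)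
    (hb1 : d ∣ β (k - r)) (hb2 : d ∣ β (k + r + 1)) :
    ∀ i j : Fin 2,
      (((List.range (2 * r + 2)).map (fun m => Cmat a β (k + r + 1 - m))).prod i j)
        ≡ 0 [ZMOD d] := by
  have hβ : (β (k + r + 1) : ZMod d.natAbs) = 0 := intCast_zmod_natAbs_eq_zero_iff.mpr hb2
  have hγ : (gam β k (r + 1) : ZMod d.natAbs) = 0 :=
    intCast_zmod_natAbs_eq_zero_iff.mpr (hb1.trans (dvd_gam_succ β k r))
  have hzero : ((List.range (2 * r + 2)).map (fun m => Cmat a β (k + r + 1 - m))).prod.map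
      (Int.castRingHom (ZMod d.natAbs)) = 0 := by
    rw [prod_cmat_eq_mul_centeredProd, Matrix.map_mul, centeredProd_map_intCast hak hnice hr,
      map_cmat, hγ, hβ]
    simp only [Matrix.mul_fin_two, mul_zero, zero_mul, add_zero]
    exact (Matrix.eta_fin_two 0).symm
  intro i j
  rw [Int.modEq_zero_iff_dvd, ← intCast_zmod_natAbs_eq_zero_iff]
  exact congrFun₂ hzero i j

theorem stmt1 (d : ℤ) (hd : 1 ≤ d) (a β : ℕ → ℤ) (k : ℕ) (hk : 1 ≤ k)
    (hak : d ∣ a k)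
    (hnice : ∀ r : ℕ, 1 ≤ r → r ≤ k →
      a (k - r) * β (k + r) * gam β k (r - 1) ≡ -(a (k + r) * gam β k r) [ZMOD d])
    (r : ℕ) (hr : r ≤ k)
    (hb1 : d ∣ β (k - r)) (hb2 : d ∣ β (k + r + 1)) :
    ∀ i j : Fin 2,
      (((List.range (2 * r + 2)).map (fun m => Cmat a β (k + r + 1 - m))).prod i j)
        ≡ 0 [ZMOD d] :=
  stmt1_general d a β k hak hnice r hr hb1 hb2
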